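/- arXiv:1008.1298 — 7 statements merged into one kernel-verified Lean document; each statement's English description precedes it below -/
import Mathlib

section
/- With β₀ = ȳ − β₁x̄ substituted, the critical points in β₁ of SSE_o(β₁, λ) = ((1−λ)²S_yy/β₁² + λ²S_xx)(S_yy − 2β₁S_xy + β₁²S_xx) are exactly the roots of the quartic P₄(β₁) = λ²√(S_xx/S_yy)·(S_xx/S_yy)·β₁⁴ − λ²(S_xx/S_yy)ρβ₁³ + (1−λ)²ρβ₁ − (1−λ)²√(S_yy/S_xx), where ρ = S_xy/√(S_xxS_yy); i.e., ∂SSE_o/∂β₁ = 0 iff P₄(β₁) = 0 for β₁ ≠ 0. -/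
/-!
Writing `SSE_o(b) = (A / b² + B) · q(b)` with `q` quadratic, the product rule gives
`SSE_o'(b) = (2 / b³) · Q(b)` for an explicit quartic `Q`, and for the coefficients at hand
`Q = √S_xx · √S_yy³ · P₄`. Both prefactors are nonzero when `b ≠ 0`.
-/

open Real

theorem hasDerivAt_inv_sq_add_mul_quadratic (A B C D E : ℝ) {b : ℝ} (hb : b ≠ 0) :
    HasDerivAt (fun x => (A / x ^ 2 + B) * (C - 2 * x * D + x ^ 2 * E))
      (2 / b ^ 3 * (B * E * b ^ 4 - B * D * b ^ 3 + A * D * b - A * C)) b := by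
  have hinv : HasDerivAt (fun x => A / x ^ 2 + B) (-2 * A / b ^ 3) b := by
    apply ((hasDerivAt_const b A).div (hasDerivAt_pow 2 b) (pow_ne_zero 2 hb)).add_const B
      |>.congr_deriv
    field_simp
    ring
  have hquad : HasDerivAt (fun x => C - 2 * x * D + x ^ 2 * E) (2 * b * E - 2 * D) b := by
    apply ((((hasDerivAt_id b).const_mul 2).mul_const D).const_sub C).add
      ((hasDerivAt_pow 2 b).mul_const E) |>.congr_deriv
    ring
  apply hinv.mul hquad |>.congr_deriv
  field_simp
  ring

theorem quartic_eq_sqrt_mul_sqrt_pow_mul {Sxx Syy : ℝ} (hSxx : 0 < Sxx) (hSyy : 0 < Syy)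
    (α β Sxy b : ℝ) :
    α * Sxx * Sxx * b ^ 4 - α * Sxx * Sxy * b ^ 3 + β * Syy * Sxy * b - β * Syy * Syy =
      √Sxx * √Syy ^ 3 *
        (α * √(Sxx / Syy) * (Sxx / Syy) * b ^ 4 - α * (Sxx / Syy) * (Sxy / √(Sxx * Syy)) * b ^ 3
          + β * (Sxy / √(Sxx * Syy)) * b - β * √(Syy / Sxx)) := by
  obtain ⟨x, hx, rfl⟩ : ∃ x > 0, Sxx = x ^ 2 := ⟨√Sxx, sqrt_pos.mpr hSxx, (sq_sqrt hSxx.le).symm⟩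
  obtain ⟨y, hy, rfl⟩ : ∃ y > 0, Syy = y ^ 2 := ⟨√Syy, sqrt_pos.mpr hSyy, (sq_sqrt hSyy.le).symm⟩
  rw [← mul_pow, ← div_pow, ← div_pow, sqrt_sq hx.le, sqrt_sq hy.le, sqrt_sq (by positivity),
    sqrt_sq (by positivity), sqrt_sq (by positivity)]
  field_simp

theorem critical_points_iff_quartic_roots_general
    (Sxx Syy Sxy : ℝ) (hSxx : 0 < Sxx) (hSyy : 0 < Syy)
    (l : ℝ)
    (ρ : ℝ) (hρ : ρ = Sxy / Real.sqrt (Sxx * Syy))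
    (SSEo P₄ : ℝ → ℝ)
    (hSSEo : ∀ b : ℝ, SSEo b =
      ((1 - l) ^ 2 * Syy / b ^ 2 + l ^ 2 * Sxx) * (Syy - 2 * b * Sxy + b ^ 2 * Sxx))
    (hP₄ : ∀ b : ℝ, P₄ b =
      l ^ 2 * Real.sqrt (Sxx / Syy) * (Sxx / Syy) * b ^ 4
        - l ^ 2 * (Sxx / Syy) * ρ * b ^ 3
        + (1 - l) ^ 2 * ρ * b
        - (1 - l) ^ 2 * Real.sqrt (Syy / Sxx)) :
    ∀ β₁ : ℝ, β₁ ≠ 0 → (deriv SSEo β₁ = 0 ↔ P₄ β₁ = 0) := by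
  intro b hb
  have hderiv := hasDerivAt_inv_sq_add_mul_quadratic ((1 - l) ^ 2 * Syy) (l ^ 2 * Sxx) Syy Sxy
    Sxx hb
  rw [← funext hSSEo] at hderiv
  rw [hderiv.deriv, hP₄, hρ, quartic_eq_sqrt_mul_sqrt_pow_mul hSxx hSyy]
  have hx : √Sxx ≠ 0 := (sqrt_pos.mpr hSxx).ne'
  have hy : √Syy ≠ 0 := (sqrt_pos.mpr hSyy).ne'
  simp [hb, hx, hy]

/-- With `β₀ = ȳ − β₁x̄` substituted, the critical points in `β₁` of
`SSE_o(β₁,λ) = ((1−λ)²S_yy/β₁² + λ²S_xx)(S_yy − 2β₁S_xy + β₁²S_xx)` are exactly the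
roots of the quartic `P₄`: for `β₁ ≠ 0`, `∂SSE_o/∂β₁ = 0 ↔ P₄(β₁) = 0`. -/
theorem critical_points_iff_quartic_roots
    (Sxx Syy Sxy : ℝ) (hSxx : 0 < Sxx) (hSyy : 0 < Syy)
    (l : ℝ) (hl : l ∈ Set.Ioo (0 : ℝ) 1)
    (ρ : ℝ) (hρ : ρ = Sxy / Real.sqrt (Sxx * Syy))
    (SSEo P₄ : ℝ → ℝ)
    (hSSEo : ∀ b : ℝ, SSEo b =
      ((1 - l) ^ 2 * Syy / b ^ 2 + l ^ 2 * Sxx) * (Syy - 2 * b * Sxy + b ^ 2 * Sxx))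
    (hP₄ : ∀ b : ℝ, P₄ b =
      l ^ 2 * Real.sqrt (Sxx / Syy) * (Sxx / Syy) * b ^ 4
        - l ^ 2 * (Sxx / Syy) * ρ * b ^ 3
        + (1 - l) ^ 2 * ρ * b
        - (1 - l) ^ 2 * Real.sqrt (Syy / Sxx)) :
    ∀ β₁ : ℝ, β₁ ≠ 0 → (deriv SSEo β₁ = 0 ↔ P₄ β₁ = 0) :=
  critical_points_iff_quartic_roots_general Sxx Syy Sxy hSxx hSyy l ρ hρ SSEo P₄ hSSEo hP₄
end

section
/- For λ ∈ (0,1) and S_xy > 0, the quartic P₄(β₁) = λ²√(S_xx/S_yy)(S_xx/S_yy)β₁⁴ − λ²(S_xx/S_yy)ρβ₁³ + (1−λ)²ρβ₁ − (1−λ)²√(S_yy/S_xx) has exactly two real roots, one positive and one negative. -/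
/-!
Substituting `t = √(S_xx/S_yy) β₁` turns `P₄` into a positive multiple of
`Q t = a t³ (t - ρ) + c (ρ t - 1)` with `a = λ² > 0` and `c = (1 - λ)² > 0`.
On `[0, ρ)` both terms are negative, while on `[ρ, ∞)` the function `Q` is strictly increasing,
starts at `Q ρ = c (ρ² - 1) ≤ 0` and is unbounded: one positive root.
For `t = -u < 0` the equation `Q t = 0` reads `a u³ = c (ρ u + 1) / (u + ρ)`; the left side
increases with `u` and, as `ρ ≤ 1`, the right side does not, while `Q 0 < 0 < Q (-u)` for large `u`:
one negative root.
-/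

open Set

def HasExactlyTwoRootsOfOppositeSign (f : ℝ → ℝ) : Prop :=
  ∃ b₁ b₂ : ℝ, b₁ < 0 ∧ 0 < b₂ ∧ f b₁ = 0 ∧ f b₂ = 0 ∧ ∀ b : ℝ, f b = 0 → b = b₁ ∨ b = b₂

theorem HasExactlyTwoRootsOfOppositeSign.comp_mul {g : ℝ → ℝ}
    (hg : HasExactlyTwoRootsOfOppositeSign g) {k s : ℝ} (hk : k ≠ 0) (hs : 0 < s) :
    HasExactlyTwoRootsOfOppositeSign fun b => k * g (s * b) := by
  obtain ⟨t₁, t₂, ht₁, ht₂, hg₁, hg₂, hg⟩ := hg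
  refine ⟨t₁ / s, t₂ / s, div_neg_of_neg_of_pos ht₁ hs, div_pos ht₂ hs, ?_, ?_, fun b hb => ?_⟩
  · simp [mul_div_cancel₀ _ hs.ne', hg₁]
  · simp [mul_div_cancel₀ _ hs.ne', hg₂]
  · rcases hg (s * b) ((mul_eq_zero.mp hb).resolve_left hk) with h | h <;>
      [left; right] <;> rw [← h, mul_div_cancel_left₀ _ hs.ne']

/-- The quartic in the variable `t = √(S_xx/S_yy) β₁`, with `a = λ²` and `c = (1 - λ)²`. -/
def reducedQuartic (ρ a c t : ℝ) : ℝ :=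
  a * t ^ 4 - a * ρ * t ^ 3 + c * ρ * t - c

namespace reducedQuartic

variable {ρ a c : ℝ}

theorem continuous : Continuous (reducedQuartic ρ a c) := by
  unfold reducedQuartic; fun_prop

theorem neg_of_nonneg_of_lt (ha : 0 < a) (hc : 0 < c) (hρ1 : ρ ≤ 1) {t : ℝ} (ht0 : 0 ≤ t)
    (htρ : t < ρ) : reducedQuartic ρ a c t < 0 := by
  have h1 : a * t ^ 3 * (t - ρ) ≤ 0 :=
    mul_nonpos_of_nonneg_of_nonpos (by positivity) (by linarith)
  have h2 : c * (ρ * t - 1) < 0 := mul_neg_of_pos_of_neg hc (by nlinarith)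
  unfold reducedQuartic; linarith

theorem strictMonoOn_Ici (ha : 0 < a) (hc : 0 < c) (hρ : 0 < ρ) :
    StrictMonoOn (reducedQuartic ρ a c) (Ici ρ) := by
  intro x hx y hy hxy
  simp only [mem_Ici] at hx hy
  have hq : 0 < a * ((y ^ 2 + y * x + x ^ 2) * (y - ρ) + x ^ 3) + c * ρ := by
    have hx0 : 0 ≤ x := hρ.le.trans hx
    have hy0 : 0 ≤ y := hρ.le.trans hy
    have : 0 ≤ (y ^ 2 + y * x + x ^ 2) * (y - ρ) :=
      mul_nonneg (by positivity) (sub_nonneg.mpr hy)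
    have : 0 ≤ x ^ 3 := by positivity
    have : 0 < c * ρ := by positivity
    nlinarith
  have hdiff : reducedQuartic ρ a c y - reducedQuartic ρ a c x =
      (y - x) * (a * ((y ^ 2 + y * x + x ^ 2) * (y - ρ) + x ^ 3) + c * ρ) := by
    unfold reducedQuartic; ring
  nlinarith [mul_pos (sub_pos.mpr hxy) hq]

theorem eq_of_neg_of_eq_zero (ha : 0 < a) (hc : 0 < c) (hρ : 0 < ρ) (hρ1 : ρ ≤ 1) {x y : ℝ}
    (hx : x < 0) (hy : y < 0) (hQx : reducedQuartic ρ a c x = 0)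
    (hQy : reducedQuartic ρ a c y = 0) : x = y := by
  wlog hxy : x < y generalizing x y
  · rcases (not_lt.mp hxy).eq_or_lt with h | h
    · exact h.symm
    · exact (this hy hx hQy hQx h).symm
  exfalso
  have hroot : ∀ t, reducedQuartic ρ a c t = 0 → a * t ^ 3 * (ρ - t) = c * (ρ * t - 1) := by
    intro t ht; unfold reducedQuartic at ht; linarith
  have hmobius : (ρ * y - 1) * (ρ - x) ≤ (ρ * x - 1) * (ρ - y) := by
    nlinarith [mul_nonneg (sub_nonneg.mpr (mul_le_one₀ hρ1 hρ.le hρ1)) (sub_pos.mpr hxy).le]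
  have hcube : x ^ 3 < y ^ 3 := Odd.strictMono_pow (by decide) hxy
  have hpos : 0 < a * ((ρ - x) * (ρ - y)) := by
    have : 0 < ρ - x := by linarith
    have : 0 < ρ - y := by linarith
    positivity
  have := calc a * y ^ 3 * ((ρ - x) * (ρ - y))
      _ = c * (ρ * y - 1) * (ρ - x) := by rw [← hroot y hQy]; ring
      _ ≤ c * (ρ * x - 1) * (ρ - y) := by rw [mul_assoc, mul_assoc]; gcongr
      _ = a * x ^ 3 * ((ρ - x) * (ρ - y)) := by rw [← hroot x hQx]; ring
  nlinarith

theorem exists_pos_root (ha : 0 < a) (hc : 0 < c) (hρ : 0 < ρ) (hρ1 : ρ ≤ 1) :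
    ∃ t, ρ ≤ t ∧ reducedQuartic ρ a c t = 0 := by
  have hρρ : ρ ≤ ρ⁻¹ := hρ1.trans (one_le_inv₀ hρ |>.mpr hρ1)
  have hleft : reducedQuartic ρ a c ρ ≤ 0 := by
    unfold reducedQuartic
    nlinarith [mul_nonneg hc.le (sub_nonneg.mpr (mul_le_one₀ hρ1 hρ.le hρ1))]
  have hright : 0 ≤ reducedQuartic ρ a c ρ⁻¹ := by
    have : 0 ≤ a * ρ⁻¹ ^ 3 * (ρ⁻¹ - ρ) := by
      have := sub_nonneg.mpr hρρ; positivity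
    have : ρ * ρ⁻¹ = 1 := mul_inv_cancel₀ hρ.ne'
    unfold reducedQuartic; nlinarith
  obtain ⟨t, ht, hQt⟩ := intermediate_value_Icc hρρ continuous.continuousOn ⟨hleft, hright⟩
  exact ⟨t, ht.1, hQt⟩

theorem exists_neg_root (ha : 0 < a) (hc : 0 < c) (hρ : 0 < ρ) (hρ1 : ρ ≤ 1) :
    ∃ t < 0, reducedQuartic ρ a c t = 0 := by
  have hQ0 : reducedQuartic ρ a c 0 < 0 := neg_of_nonneg_of_lt ha hc hρ1 le_rfl hρ
  set u := 1 + c / a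
  have hu1 : 1 ≤ u := le_add_of_nonneg_right (by positivity)
  have hleft : 0 ≤ reducedQuartic ρ a c (-u) := by
    -- `Q(-u) = a u³ (u + ρ) - c (ρ u + 1)`, where `a u³ ≥ a u = a + c` and `u + ρ ≥ ρ u + 1`
    have hau : a * u = a + c := by simp only [u]; field_simp
    have hcube : c ≤ a * u ^ 3 := by nlinarith [pow_le_pow_right₀ hu1 (show 1 ≤ 3 by norm_num)]
    have hmob : ρ * u + 1 ≤ u + ρ := by nlinarith
    unfold reducedQuartic
    nlinarith [mul_le_mul hcube hmob (by positivity) (by positivity)]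
  obtain ⟨t, ht, hQt⟩ :=
    intermediate_value_Icc' (by linarith : -u ≤ 0) continuous.continuousOn ⟨hQ0.le, hleft⟩
  exact ⟨t, ht.2.lt_of_ne (by rintro rfl; exact hQ0.ne hQt), hQt⟩

theorem hasExactlyTwoRootsOfOppositeSign (ha : 0 < a) (hc : 0 < c) (hρ : 0 < ρ) (hρ1 : ρ ≤ 1) :
    HasExactlyTwoRootsOfOppositeSign (reducedQuartic ρ a c) := by
  obtain ⟨t₁, ht₁, hQ₁⟩ := exists_neg_root ha hc hρ hρ1
  obtain ⟨t₂, ht₂, hQ₂⟩ := exists_pos_root ha hc hρ hρ1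
  refine ⟨t₁, t₂, ht₁, hρ.trans_le ht₂, hQ₁, hQ₂, fun t hQt => ?_⟩
  rcases lt_trichotomy t 0 with ht | rfl | ht
  · exact .inl (eq_of_neg_of_eq_zero ha hc hρ hρ1 ht ht₁ hQt hQ₁)
  · exact absurd hQt (neg_of_nonneg_of_lt ha hc hρ1 le_rfl hρ).ne
  · have htρ : ρ ≤ t := not_lt.mp fun h => (neg_of_nonneg_of_lt ha hc hρ1 ht.le h).ne hQt
    exact .inr ((strictMonoOn_Ici ha hc hρ).injOn htρ ht₂ (hQt.trans hQ₂.symm))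

end reducedQuartic

/-- For `λ ∈ (0,1)` and `S_xy > 0`, the quartic `P₄` has exactly two real
roots, one positive and one negative. -/
theorem quartic_exactly_two_real_roots
    (Sxx Syy Sxy : ℝ) (hSxx : 0 < Sxx) (hSyy : 0 < Syy) (hSxy : 0 < Sxy)
    (ρ : ℝ) (hρ : ρ = Sxy / Real.sqrt (Sxx * Syy)) (hρ1 : ρ ≤ 1)
    (l : ℝ) (hl : l ∈ Set.Ioo (0 : ℝ) 1)
    (P₄ : ℝ → ℝ)
    (hP₄ : ∀ b : ℝ, P₄ b =
      l ^ 2 * Real.sqrt (Sxx / Syy) * (Sxx / Syy) * b ^ 4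
        - l ^ 2 * (Sxx / Syy) * ρ * b ^ 3
        + (1 - l) ^ 2 * ρ * b
        - (1 - l) ^ 2 * Real.sqrt (Syy / Sxx)) :
    ∃ b₁ b₂ : ℝ, b₁ < 0 ∧ 0 < b₂ ∧ P₄ b₁ = 0 ∧ P₄ b₂ = 0 ∧
      ∀ b : ℝ, P₄ b = 0 → b = b₁ ∨ b = b₂ := by
  obtain ⟨hl0, hl1⟩ := hl
  have hρ0 : 0 < ρ := hρ ▸ by positivity
  set s := Real.sqrt (Sxx / Syy)
  have hs : 0 < s := by positivity
  have hs2 : s ^ 2 = Sxx / Syy := Real.sq_sqrt (by positivity)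
  have hsinv : Real.sqrt (Syy / Sxx) = s⁻¹ := by rw [← inv_div, Real.sqrt_inv]
  have hP₄_eq : P₄ = fun b => s⁻¹ * reducedQuartic ρ (l ^ 2) ((1 - l) ^ 2) (s * b) := by
    ext b
    rw [hP₄, hsinv, ← hs2]
    unfold reducedQuartic
    field_simp
  rw [hP₄_eq]
  exact (reducedQuartic.hasExactlyTwoRootsOfOppositeSign (by positivity)
    (pow_pos (sub_pos.mpr hl1) 2) hρ0 hρ1).comp_mul (inv_ne_zero hs.ne') hs
end

section
/- σ̃_τ²(β₁)/σ̃_δ²(β₁) = S_yy/S_xx holds if and only if β₁ = ±√(S_yy/S_xx), among β₁ with σ̃_δ²(β₁) ≠ 0. -/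
/-! Both variance estimates carry the same factor `1/n`, so the ratio is
`(S_yy - β₁ S_xy) / (S_xx - S_xy/β₁)`. Cross-multiplying against `S_yy/S_xx`, the terms
`S_xx S_yy` cancel and what remains is `(S_xy/β₁) (S_yy - S_xx β₁²) = 0`; as `S_xy ≠ 0` this
says `β₁² = S_yy/S_xx`. -/

theorem sub_mul_div_sub_div_eq_div_iff_sq_eq {K : Type*} [Field K] {x y z b : K}
    (hx : x ≠ 0) (hz : z ≠ 0) (hb : b ≠ 0) (hden : x - z / b ≠ 0) :
    (y - b * z) / (x - z / b) = y / x ↔ b ^ 2 = y / x := by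
  have cross : (y - b * z) * x - y * (x - z / b) = z / b * (y - b ^ 2 * x) := by
    field_simp
    ring
  rw [div_eq_div_iff hden hx, ← sub_eq_zero, cross, mul_eq_zero, sub_eq_zero, eq_div_iff hx]
  simp only [div_eq_zero_iff, hz, hb, or_self, false_or, eq_comm]

theorem Real.eq_sqrt_or_eq_neg_sqrt_iff_sq_eq {b c : ℝ} (hc : 0 ≤ c) :
    b = √c ∨ b = -√c ↔ b ^ 2 = c := by
  rw [← sq_eq_sq_iff_eq_or_eq_neg, Real.sq_sqrt hc]

theorem ratio_eq_iff_gm_general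
    (n : ℕ) (Sxx Syy Sxy : ℝ) (hSxx : 0 < Sxx) (hSyy : 0 < Syy)
    (hSxy : Sxy ≠ 0)
    (σδ2 στ2 : ℝ → ℝ)
    (hσδ2 : ∀ b : ℝ, σδ2 b = Sxx / n - Sxy / (n * b))
    (hστ2 : ∀ b : ℝ, στ2 b = Syy / n - b * Sxy / n) :
    ∀ b : ℝ, b ≠ 0 → σδ2 b ≠ 0 →
      (στ2 b / σδ2 b = Syy / Sxx ↔
        b = Real.sqrt (Syy / Sxx) ∨ b = -Real.sqrt (Syy / Sxx)) := by
  intro b hb hσ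
  have hσδ2b : σδ2 b = (Sxx - Sxy / b) / n := by
    rw [hσδ2, div_mul_eq_div_div_swap, sub_div]
  have hστ2b : στ2 b = (Syy - b * Sxy) / n := by
    rw [hστ2, sub_div]
  rw [hσδ2b, div_ne_zero_iff] at hσ
  rw [hσδ2b, hστ2b, div_div_div_cancel_right₀ hσ.2,
    sub_mul_div_sub_div_eq_div_iff_sq_eq hSxx.ne' hSxy hb hσ.1,
    Real.eq_sqrt_or_eq_neg_sqrt_iff_sq_eq (by positivity)]

/-- `σ̃_τ²(β₁)/σ̃_δ²(β₁) = S_yy/S_xx` if and only if `β₁ = ±√(S_yy/S_xx)`,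
among `β₁ ≠ 0` with `σ̃_δ²(β₁) ≠ 0`. -/
theorem ratio_eq_iff_gm
    (n : ℕ) (hn : 1 ≤ n) (Sxx Syy Sxy : ℝ) (hSxx : 0 < Sxx) (hSyy : 0 < Syy)
    (hSxy : Sxy ≠ 0)
    (σδ2 στ2 : ℝ → ℝ)
    (hσδ2 : ∀ b : ℝ, σδ2 b = Sxx / n - Sxy / (n * b))
    (hστ2 : ∀ b : ℝ, στ2 b = Syy / n - b * Sxy / n) :
    ∀ b : ℝ, b ≠ 0 → σδ2 b ≠ 0 →
      (στ2 b / σδ2 b = Syy / Sxx ↔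
        b = Real.sqrt (Syy / Sxx) ∨ b = -Real.sqrt (Syy / Sxx)) :=
  ratio_eq_iff_gm_general n Sxx Syy Sxy hSxx hSyy hSxy σδ2 στ2 hσδ2 hστ2
end

section
/- If κ = S_yy/S_xx then β₁^mle(κ) = √(S_yy/S_xx) = β₁^gm. -/
open Real

theorem Real.div_sqrt_mul_eq_sqrt_div (x : ℝ) {y : ℝ} (hy : 0 ≤ y) :
    y / √(x * y) = √(y / x) := by
  rw [sqrt_div hy, sqrt_mul' x hy]
  rcases (sqrt_nonneg y).eq_or_lt with hy0 | hy0
  · rw [← hy0, ← mul_self_sqrt hy, ← hy0]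
    simp
  · nth_rw 1 [← mul_self_sqrt hy]
    rw [mul_comm (√x), mul_div_mul_left _ _ hy0.ne']

/-- The maximum-likelihood slope `β₁^mle(κ)` of the errors-in-variables model with error-variance
ratio `κ`. -/
noncomputable def mleSlope (Sxx Syy ρ κ : ℝ) : ℝ :=
  ((Syy - κ * Sxx) + √((Syy - κ * Sxx) ^ 2 + 4 * κ * ρ ^ 2 * Sxx * Syy)) /
    (2 * ρ * √(Sxx * Syy))

theorem mleSlope_div_eq_sqrt_div (Sxx Syy ρ : ℝ) (hSxx : Sxx ≠ 0) (hSyy : 0 ≤ Syy) (hρ : 0 < ρ) :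
    mleSlope Sxx Syy ρ (Syy / Sxx) = √(Syy / Sxx) := by
  have linear_term : Syy - Syy / Sxx * Sxx = 0 := by
    rw [div_mul_cancel₀ _ hSxx, sub_self]
  have discriminant : (0 : ℝ) ^ 2 + 4 * (Syy / Sxx) * ρ ^ 2 * Sxx * Syy = (2 * ρ * Syy) ^ 2 := by
    field_simp
    ring
  rw [mleSlope, linear_term, discriminant, sqrt_sq (by positivity), zero_add,
    mul_div_mul_left _ _ (by positivity), div_sqrt_mul_eq_sqrt_div Sxx hSyy]

theorem mle_eq_gm_general
    (Sxx Syy : ℝ) (hSxx : 0 < Sxx) (hSyy : 0 < Syy)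
    (ρ : ℝ) (hρpos : 0 < ρ)
    (mle : ℝ → ℝ)
    (hmle : ∀ κ : ℝ, mle κ =
      ((Syy - κ * Sxx) + Real.sqrt ((Syy - κ * Sxx) ^ 2 + 4 * κ * ρ ^ 2 * Sxx * Syy)) /
        (2 * ρ * Real.sqrt (Sxx * Syy))) :
    mle (Syy / Sxx) = Real.sqrt (Syy / Sxx) :=
  (hmle _).trans (mleSlope_div_eq_sqrt_div Sxx Syy ρ hSxx.ne' hSyy.le hρpos)

/-- If `κ = S_yy/S_xx` then `β₁^mle(κ) = √(S_yy/S_xx) = β₁^gm`. -/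
theorem mle_eq_gm
    (Sxx Syy Sxy : ℝ) (hSxx : 0 < Sxx) (hSyy : 0 < Syy)
    (ρ : ℝ) (hρ : ρ = Sxy / Real.sqrt (Sxx * Syy)) (hρpos : 0 < ρ)
    (mle : ℝ → ℝ)
    (hmle : ∀ κ : ℝ, mle κ =
      ((Syy - κ * Sxx) + Real.sqrt ((Syy - κ * Sxx) ^ 2 + 4 * κ * ρ ^ 2 * Sxx * Syy)) /
        (2 * ρ * Real.sqrt (Sxx * Syy))) :
    mle (Syy / Sxx) = Real.sqrt (Syy / Sxx) :=
  mle_eq_gm_general Sxx Syy hSxx hSyy ρ hρpos mle hmle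
end

section
/- For every β₁ strictly between β₁^ver = S_xy/S_xx and β₁^hor = S_yy/S_xy, setting κ̃(β₁) = (S_yy − β₁ρ√(S_xxS_yy))/(S_xx − (ρ/β₁)√(S_xxS_yy)), one has β₁^mle(κ̃(β₁)) = β₁. That is, the map β₁ ↦ β₁^mle(κ̃(β₁)) is the identity on (β₁^ver, β₁^hor). -/
/-! For `b` in the interval, `κ = κ̃(b)` is positive and makes `b` a root of
`S_xy β² − (S_yy − κ S_xx) β − κ S_xy`, using `ρ √(S_xx S_yy) = S_xy`. Since `κ > 0` the product
of the roots is negative, so `b > 0` is the larger root, which is exactly `β₁^mle(κ)`. -/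

theorem eq_add_sqrt_div_of_sq_eq {a B C x : ℝ} (ha : 0 < a) (hC : 0 ≤ C) (hx : 0 < x)
    (h : a * x ^ 2 = B * x + C) : x = (B + √(B ^ 2 + 4 * a * C)) / (2 * a) := by
  have hroot : 0 ≤ 2 * a * x - B := by
    have : 0 < x * (2 * a * x - B) := by
      rw [show x * (2 * a * x - B) = a * x ^ 2 + C by linear_combination h]
      positivity
    exact (pos_of_mul_pos_right this hx.le).le
  have hdisc : B ^ 2 + 4 * a * C = (2 * a * x - B) ^ 2 := by linear_combination (-4 * a) * h
  rw [hdisc, Real.sqrt_sq hroot]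
  field_simp
  ring

theorem mul_sq_eq_of_mul_sub_div_eq {Sxx Syy Sxy b κ : ℝ} (hb : b ≠ 0)
    (hκ : κ * (Sxx - Sxy / b) = Syy - b * Sxy) :
    Sxy * b ^ 2 = (Syy - κ * Sxx) * b + κ * Sxy := by
  have : κ * (b * Sxx - Sxy) = b * (Syy - b * Sxy) := by
    rw [← hκ]
    field_simp
  linear_combination this

theorem mle_kappa_tilde_identity_general
    (Sxx Syy Sxy : ℝ) (hSxx : 0 < Sxx) (hSyy : 0 < Syy) (hSxy : 0 < Sxy)
    (ρ : ℝ) (hρ : ρ = Sxy / Real.sqrt (Sxx * Syy))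
    (mle κt : ℝ → ℝ)
    (hmle : ∀ κ : ℝ, mle κ =
      ((Syy - κ * Sxx) + Real.sqrt ((Syy - κ * Sxx) ^ 2 + 4 * κ * ρ ^ 2 * Sxx * Syy)) /
        (2 * ρ * Real.sqrt (Sxx * Syy)))
    (hκt : ∀ b : ℝ, κt b =
      (Syy - b * ρ * Real.sqrt (Sxx * Syy)) /
        (Sxx - (ρ / b) * Real.sqrt (Sxx * Syy))) :
    ∀ b ∈ Set.Ioo (Sxy / Sxx) (Syy / Sxy), mle (κt b) = b := by
  rintro b ⟨hb_ver, hb_hor⟩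
  have hρs : ρ * √(Sxx * Syy) = Sxy := by rw [hρ]; field_simp
  have hb : 0 < b := (div_pos hSxy hSxx).trans hb_ver
  have hden : 0 < Sxx - Sxy / b := by
    rw [sub_pos, div_lt_iff₀ hb]
    rw [div_lt_iff₀ hSxx] at hb_ver
    linarith
  have hnum : 0 < Syy - b * Sxy := by
    rw [lt_div_iff₀ hSxy] at hb_hor
    linarith
  have hκ : κt b = (Syy - b * Sxy) / (Sxx - Sxy / b) := by
    rw [hκt, mul_assoc, hρs, div_mul_eq_mul_div, hρs]
  have hquad := mul_sq_eq_of_mul_sub_div_eq (κ := κt b) hb.ne'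
    (by rw [hκ, div_mul_cancel₀ _ hden.ne'])
  have hκpos : 0 < κt b := hκ ▸ div_pos hnum hden
  have hρ2 : ρ ^ 2 * (Sxx * Syy) = Sxy ^ 2 := by
    rw [← hρs, mul_pow, Real.sq_sqrt (by positivity)]
  rw [hmle, mul_assoc 2, hρs,
    show 4 * κt b * ρ ^ 2 * Sxx * Syy = 4 * Sxy * (κt b * Sxy) by
      linear_combination 4 * κt b * hρ2]
  exact (eq_add_sqrt_div_of_sq_eq hSxy (by positivity) hb hquad).symm

/-- For every `β₁` strictly between `β₁^ver = S_xy/S_xx` and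
`β₁^hor = S_yy/S_xy`, with `κ̃(β₁) = (S_yy − β₁ρ√(S_xxS_yy))/(S_xx − (ρ/β₁)√(S_xxS_yy))`,
one has `β₁^mle(κ̃(β₁)) = β₁`. -/
theorem mle_kappa_tilde_identity
    (Sxx Syy Sxy : ℝ) (hSxx : 0 < Sxx) (hSyy : 0 < Syy) (hSxy : 0 < Sxy)
    (ρ : ℝ) (hρ : ρ = Sxy / Real.sqrt (Sxx * Syy)) (hρmem : ρ ∈ Set.Ioo (0 : ℝ) 1)
    (mle κt : ℝ → ℝ)
    (hmle : ∀ κ : ℝ, mle κ =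
      ((Syy - κ * Sxx) + Real.sqrt ((Syy - κ * Sxx) ^ 2 + 4 * κ * ρ ^ 2 * Sxx * Syy)) /
        (2 * ρ * Real.sqrt (Sxx * Syy)))
    (hκt : ∀ b : ℝ, κt b =
      (Syy - b * ρ * Real.sqrt (Sxx * Syy)) /
        (Sxx - (ρ / b) * Real.sqrt (Sxx * Syy))) :
    ∀ b ∈ Set.Ioo (Sxy / Sxx) (Syy / Sxy), mle (κt b) = b :=
  mle_kappa_tilde_identity_general Sxx Syy Sxy hSxx hSyy hSxy ρ hρ mle κt hmle hκt
end

section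
/- At the perpendicular estimator β₁^per, the two Madansky moment estimators are equal: σ̃_δ²(β₁^per) = σ̃_τ²(β₁^per) = (S_xx + S_yy − √((S_xx − S_yy)² + 4ρ²S_xxS_yy))/(2n), hence the estimated error ratio κ̃(β₁^per) equals 1. -/
/-!
The perpendicular slope `β` is a root of `Sxy β² + (Sxx − Syy) β − Sxy = 0`, and
multiplying `σ̃_δ²(β) = σ̃_τ²(β)` by `n β` gives exactly this quadratic. The common value then
follows from `β Sxy = (Syy − Sxx + √D)/2` with `D = (Syy − Sxx)² + 4 Sxy² = (Sxx − Syy)² + 4ρ²SxxSyy`,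
and it is nonzero because `√D = Sxx + Syy` would force `Sxy² = Sxx Syy`.
-/

open Real

noncomputable def perSlope (Sxx Syy Sxy : ℝ) : ℝ :=
  ((Syy - Sxx) + √((Syy - Sxx) ^ 2 + 4 * Sxy ^ 2)) / (2 * Sxy)

section

variable {Sxx Syy Sxy : ℝ}

lemma perSlope_mul (h : Sxy ≠ 0) :
    perSlope Sxx Syy Sxy * Sxy = ((Syy - Sxx) + √((Syy - Sxx) ^ 2 + 4 * Sxy ^ 2)) / 2 := by
  unfold perSlope
  field_simp

lemma perSlope_isRoot (h : Sxy ≠ 0) :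
    Sxy * perSlope Sxx Syy Sxy ^ 2 + (Sxx - Syy) * perSlope Sxx Syy Sxy - Sxy = 0 := by
  have hsq := sq_sqrt (by positivity : 0 ≤ (Syy - Sxx) ^ 2 + 4 * Sxy ^ 2)
  have hmul := perSlope_mul (Sxx := Sxx) (Syy := Syy) h
  set s := √((Syy - Sxx) ^ 2 + 4 * Sxy ^ 2)
  set β := perSlope Sxx Syy Sxy
  refine mul_left_cancel₀ h ?_
  linear_combination (β * Sxy + (Sxx - Syy) / 2 + s / 2) * hmul + hsq / 4

lemma perSlope_ne_zero (h : Sxy ≠ 0) : perSlope Sxx Syy Sxy ≠ 0 := by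
  intro h0
  have hroot := perSlope_isRoot (Sxx := Sxx) (Syy := Syy) h
  rw [h0] at hroot
  exact h (by linarith)

lemma sub_perSlope_mul (h : Sxy ≠ 0) :
    Syy - perSlope Sxx Syy Sxy * Sxy = (Sxx + Syy - √((Syy - Sxx) ^ 2 + 4 * Sxy ^ 2)) / 2 := by
  rw [perSlope_mul h]
  ring

lemma sub_div_eq_sub_mul_div_of_isRoot (n : ℝ) {b : ℝ} (hb : b ≠ 0)
    (hroot : Sxy * b ^ 2 + (Sxx - Syy) * b - Sxy = 0) :
    Sxx / n - Sxy / (n * b) = Syy / n - b * Sxy / n := by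
  have hmul : Sxx - Sxy / b = Syy - b * Sxy := by
    field_simp
    linear_combination hroot
  rw [div_mul_eq_div_div_swap, ← sub_div, ← sub_div, hmul]

lemma discr_eq_of_rho_sq (hSxx : Sxx ≠ 0) (hSyy : Syy ≠ 0) :
    (Sxx - Syy) ^ 2 + 4 * (Sxy ^ 2 / (Sxx * Syy)) * Sxx * Syy = (Syy - Sxx) ^ 2 + 4 * Sxy ^ 2 := by
  field_simp
  ring

lemma sqrt_discr_ne_add (h : Sxy ^ 2 < Sxx * Syy) :
    √((Syy - Sxx) ^ 2 + 4 * Sxy ^ 2) ≠ Sxx + Syy := by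
  intro hs
  have hsq := sq_sqrt (by positivity : 0 ≤ (Syy - Sxx) ^ 2 + 4 * Sxy ^ 2)
  rw [hs] at hsq
  nlinarith

end

/-- At the perpendicular estimator `β₁^per`, the two Madansky moment
estimators are equal, with common value
`(S_xx + S_yy − √((S_xx − S_yy)² + 4ρ²S_xxS_yy))/(2n)`; hence the estimated error ratio
`κ̃(β₁^per) = σ̃_τ²(β₁^per)/σ̃_δ²(β₁^per)` equals `1`. -/
theorem madansky_at_per
    (n : ℕ) (hn : 1 ≤ n) (Sxx Syy Sxy : ℝ) (hSxx : 0 < Sxx) (hSyy : 0 < Syy)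
    (hSxy : 0 < Sxy) (hρlt : Sxy ^ 2 < Sxx * Syy)
    (ρ2 : ℝ) (hρ2 : ρ2 = Sxy ^ 2 / (Sxx * Syy))
    (σδ2 στ2 : ℝ → ℝ)
    (hσδ2 : ∀ b : ℝ, σδ2 b = Sxx / n - Sxy / (n * b))
    (hστ2 : ∀ b : ℝ, στ2 b = Syy / n - b * Sxy / n)
    (βper : ℝ)
    (hβper : βper = ((Syy - Sxx) + Real.sqrt ((Syy - Sxx) ^ 2 + 4 * Sxy ^ 2)) / (2 * Sxy)) :
    σδ2 βper = στ2 βper ∧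
      στ2 βper =
        (Sxx + Syy - Real.sqrt ((Sxx - Syy) ^ 2 + 4 * ρ2 * Sxx * Syy)) / (2 * n) ∧
      στ2 βper / σδ2 βper = 1 := by
  obtain rfl : βper = perSlope Sxx Syy Sxy := hβper
  have hSxy0 : Sxy ≠ 0 := hSxy.ne'
  have hn0 : (n : ℝ) ≠ 0 := Nat.cast_ne_zero.mpr (by omega)
  have hτ : στ2 (perSlope Sxx Syy Sxy) =
      (Sxx + Syy - √((Syy - Sxx) ^ 2 + 4 * Sxy ^ 2)) / 2 / n := by
    rw [hστ2, ← sub_div, sub_perSlope_mul hSxy0]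
  have hsame : σδ2 (perSlope Sxx Syy Sxy) = στ2 (perSlope Sxx Syy Sxy) := by
    rw [hσδ2, hστ2]
    exact sub_div_eq_sub_mul_div_of_isRoot n (perSlope_ne_zero hSxy0) (perSlope_isRoot hSxy0)
  refine ⟨hsame, ?_, ?_⟩
  · rw [hτ, hρ2, discr_eq_of_rho_sq hSxx.ne' hSyy.ne', div_div]
  · rw [hsame]
    refine div_self ?_
    rw [hτ]
    exact div_ne_zero (div_ne_zero (sub_ne_zero.mpr (sqrt_discr_ne_add hρlt).symm) two_ne_zero) hn0
end

section
/- For λ ∈ (0,1) and S_xy > 0, the positive root β₁(λ) of P₄ lies in the closed interval [β₁^ver, β₁^hor] = [S_xy/S_xx, S_yy/S_xy]; equivalently, P₄(β₁^ver) ≤ 0 ≤ P₄(β₁^hor) for all λ ∈ (0,1) when ρ < 1. -/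
/-! Writing `s = √(Sxx/Syy)`, the quartic splits as
`P₄(b) = λ² s (Sxx/Syy) b³ (b - Sxy/Sxx) + (1-λ)² ρ (b - Syy/Sxy)`,
a combination with positive weights (for `b > 0`) of the signed offsets of `b` from the two endpoints.
Since `ρ < 1` means `Sxy/Sxx < Syy/Sxy`, both terms have the same strict sign outside the interval,
and the signs at the endpoints are read off from the one surviving term. -/

open Real Set

lemma mem_Icc_of_weighted_sum_eq_zero {A B v h b : ℝ} (hA : 0 < A) (hB : 0 < B) (hvh : v ≤ h)
    (hsum : A * (b - v) + B * (b - h) = 0) : b ∈ Icc v h := by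
  constructor
  · by_contra! hbv
    have : A * (b - v) < 0 := mul_neg_of_pos_of_neg hA (by linarith)
    have : B * (b - h) < 0 := mul_neg_of_pos_of_neg hB (by linarith)
    linarith
  · by_contra! hhb
    have : 0 < A * (b - v) := mul_pos hA (by linarith)
    have : 0 < B * (b - h) := mul_pos hB (by linarith)
    linarith

lemma div_lt_div_of_div_sqrt_mul_lt_one {Sxx Syy Sxy : ℝ} (hSxx : 0 < Sxx) (hSyy : 0 < Syy)
    (hSxy : 0 < Sxy) (h : Sxy / √(Sxx * Syy) < 1) : Sxy / Sxx < Syy / Sxy := by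
  have hlt : Sxy < √(Sxx * Syy) := (div_lt_one (by positivity)).mp h
  have hsq : Sxy ^ 2 < Sxx * Syy := (Real.lt_sqrt hSxy.le).mp hlt
  rw [div_lt_div_iff₀ hSxx hSxy]
  nlinarith

lemma quartic_eq_weighted_sum {Sxx Syy Sxy : ℝ} (hSxx : 0 < Sxx) (hSyy : 0 < Syy) (hSxy : Sxy ≠ 0)
    (l b : ℝ) :
    l ^ 2 * √(Sxx / Syy) * (Sxx / Syy) * b ^ 4
        - l ^ 2 * (Sxx / Syy) * (Sxy / √(Sxx * Syy)) * b ^ 3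
        + (1 - l) ^ 2 * (Sxy / √(Sxx * Syy)) * b
        - (1 - l) ^ 2 * √(Syy / Sxx)
      = l ^ 2 * √(Sxx / Syy) * (Sxx / Syy) * b ^ 3 * (b - Sxy / Sxx)
        + (1 - l) ^ 2 * (Sxy / √(Sxx * Syy)) * (b - Syy / Sxy) := by
  obtain ⟨c, hc, rfl⟩ : ∃ c, 0 < c ∧ Sxx = c ^ 2 := ⟨√Sxx, by positivity, (sq_sqrt hSxx.le).symm⟩
  obtain ⟨d, hd, rfl⟩ : ∃ d, 0 < d ∧ Syy = d ^ 2 := ⟨√Syy, by positivity, (sq_sqrt hSyy.le).symm⟩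
  have hcd : √(c ^ 2 / d ^ 2) = c / d := by rw [← div_pow, sqrt_sq (by positivity)]
  have hdc : √(d ^ 2 / c ^ 2) = d / c := by rw [← div_pow, sqrt_sq (by positivity)]
  have hmul : √(c ^ 2 * d ^ 2) = c * d := by rw [← mul_pow, sqrt_sq (by positivity)]
  rw [hcd, hdc, hmul]
  field_simp
  ring

/-- For `λ ∈ (0,1)` and `S_xy > 0` with `ρ < 1`, every positive root of
`P₄` lies in the closed interval `[β₁^ver, β₁^hor] = [S_xy/S_xx, S_yy/S_xy]`;
equivalently, `P₄(β₁^ver) ≤ 0 ≤ P₄(β₁^hor)`. -/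
theorem positive_root_in_interval
    (Sxx Syy Sxy : ℝ) (hSxx : 0 < Sxx) (hSyy : 0 < Syy) (hSxy : 0 < Sxy)
    (ρ : ℝ) (hρ : ρ = Sxy / Real.sqrt (Sxx * Syy)) (hρ1 : ρ < 1)
    (P₄ : ℝ → ℝ → ℝ)
    (hP₄ : ∀ l b : ℝ, P₄ l b =
      l ^ 2 * Real.sqrt (Sxx / Syy) * (Sxx / Syy) * b ^ 4
        - l ^ 2 * (Sxx / Syy) * ρ * b ^ 3
        + (1 - l) ^ 2 * ρ * b
        - (1 - l) ^ 2 * Real.sqrt (Syy / Sxx)) :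
    ∀ l ∈ Set.Ioo (0 : ℝ) 1,
      (∀ b : ℝ, 0 < b → P₄ l b = 0 → b ∈ Set.Icc (Sxy / Sxx) (Syy / Sxy)) ∧
        P₄ l (Sxy / Sxx) ≤ 0 ∧ 0 ≤ P₄ l (Syy / Sxy) := by
  rintro l ⟨hl0, hl1⟩
  subst hρ
  have hsplit := quartic_eq_weighted_sum hSxx hSyy hSxy.ne' l
  have hvh := div_lt_div_of_div_sqrt_mul_lt_one hSxx hSyy hSxy hρ1
  have hB : 0 < (1 - l) ^ 2 * (Sxy / √(Sxx * Syy)) := by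
    have : 0 < 1 - l := by linarith
    positivity
  have hA : ∀ b, 0 < b → 0 < l ^ 2 * √(Sxx / Syy) * (Sxx / Syy) * b ^ 3 := fun b hb => by
    have : 0 < √(Sxx / Syy) := sqrt_pos.mpr (by positivity)
    positivity
  refine ⟨fun b hb hroot => ?_, ?_, ?_⟩
  · rw [hP₄, hsplit] at hroot
    exact mem_Icc_of_weighted_sum_eq_zero (hA b hb) hB hvh.le hroot
  · rw [hP₄, hsplit, sub_self, mul_zero, zero_add]
    exact mul_nonpos_of_nonneg_of_nonpos hB.le (by linarith)
  · rw [hP₄, hsplit, sub_self, mul_zero, add_zero]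
    exact mul_nonneg (hA _ (by positivity)).le (by linarith)
end
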